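/- If λ = (λ₁,...,λₙ) ∈ Γ₂ with λ₁ ≥ λ₂ ≥ ... ≥ λₙ, then for every j ∈ {2,...,n}, |λⱼ| ≤ (n−1)λ₂. -/

import Mathlib

open Finset

noncomputable def s1 {n : ℕ} (x : Fin n → ℝ) : ℝ := ∑ i, x i

noncomputable def s2 {n : ℕ} (x : Fin n → ℝ) : ℝ :=
  ((∑ i, x i) ^ 2 - ∑ i, (x i) ^ 2) / 2

noncomputable def s3 {n : ℕ} (x : Fin n → ℝ) : ℝ :=
  ((∑ i, x i) ^ 3 - 3 * (∑ i, x i) * (∑ i, (x i) ^ 2) + 2 * ∑ i, (x i) ^ 3) / 6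

def Gamma2 {n : ℕ} : Set (Fin n → ℝ) := {x | 0 < s1 x ∧ 0 < s2 x}

def Gamma3 {n : ℕ} : Set (Fin n → ℝ) := {x | 0 < s1 x ∧ 0 < s2 x ∧ 0 < s3 x}

theorem stmt_7 (n : ℕ) (hn : 2 ≤ n) (l : Fin n → ℝ)
    (hsort : ∀ i j : Fin n, i ≤ j → l j ≤ l i) (hG : l ∈ Gamma2) :
    ∀ j : Fin n, j ≠ ⟨0, by omega⟩ → |l j| ≤ ((n : ℝ) - 1) * l ⟨1, by omega⟩ := by
  intro j hj
  set z : Fin n := ⟨0, by omega⟩ with hzdef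
  set o : Fin n := ⟨1, by omega⟩ with hodef
  obtain ⟨h1, h2⟩ := hG
  unfold s1 at h1
  unfold s2 at h2
  set S := ∑ i, l i with hS
  set Q := ∑ i, (l i) ^ 2 with hQ
  have hSQ : Q < S ^ 2 := by nlinarith
  -- l z is the max
  have hmax : ∀ i : Fin n, l i ≤ l z := by
    intro i
    exact hsort z i (by rw [Fin.le_def]; exact Nat.zero_le _)
  -- l z > 0
  have hcard : (univ : Finset (Fin n)).card = n := by simp
  have hsum_le : S ≤ (n : ℝ) * l z := by
    calc S ≤ (univ : Finset (Fin n)).card • l z :=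
          Finset.sum_le_card_nsmul _ _ _ (fun i _ => hmax i)
      _ = (n : ℝ) * l z := by rw [hcard, nsmul_eq_mul]
  have hnpos : (0 : ℝ) < n := by positivity
  have hlz_pos : 0 < l z := by nlinarith
  have hlz2 : (l z) ^ 2 ≤ Q :=
    Finset.single_le_sum (f := fun i => (l i) ^ 2) (fun i _ => sq_nonneg _) (mem_univ z)
  have hlzS : l z < S := by nlinarith
  -- T = sum over i ≠ z
  have hT : ∑ i ∈ univ.erase z, l i + l z = S :=
    Finset.sum_erase_add _ _ (mem_univ z)
  have hTpos : 0 < ∑ i ∈ univ.erase z, l i := by linarith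
  -- each i ≠ z has l i ≤ l o
  have hle_o : ∀ i ∈ univ.erase z, l i ≤ l o := by
    intro i hi
    have hiz : i ≠ z := (Finset.mem_erase.mp hi).1
    have : o ≤ i := by
      have hz0 : (z : ℕ) = 0 := rfl
      have ho1 : (o : ℕ) = 1 := rfl
      rw [Fin.le_def, ho1]
      have : (i : ℕ) ≠ 0 := fun h => hiz (Fin.ext (by rw [h, hz0]))
      omega
    exact hsort o i this
  have hcard1 : (univ.erase z).card = n - 1 := by
    rw [Finset.card_erase_of_mem (mem_univ z), hcard]
  have hcast1 : ((n - 1 : ℕ) : ℝ) = (n : ℝ) - 1 := by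
    rw [Nat.cast_sub (by omega)]; norm_num
  have hT_le : ∑ i ∈ univ.erase z, l i ≤ ((n : ℝ) - 1) * l o := by
    calc ∑ i ∈ univ.erase z, l i ≤ (univ.erase z).card • l o :=
          Finset.sum_le_card_nsmul _ _ _ hle_o
      _ = ((n : ℝ) - 1) * l o := by rw [hcard1, nsmul_eq_mul, hcast1]
  have hlo_pos : 0 < l o := by nlinarith
  -- j ∈ erase z
  have hjmem : j ∈ univ.erase z := Finset.mem_erase.mpr ⟨hj, mem_univ j⟩
  have hTj : ∑ i ∈ (univ.erase z).erase j, l i + l j = ∑ i ∈ univ.erase z, l i :=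
    Finset.sum_erase_add _ _ hjmem
  have hcard2 : ((univ.erase z).erase j).card = n - 2 := by
    rw [Finset.card_erase_of_mem hjmem, hcard1]; omega
  have hcast2 : ((n - 2 : ℕ) : ℝ) = (n : ℝ) - 2 := by
    rw [Nat.cast_sub (by omega)]; norm_num
  have hrest_le : ∑ i ∈ (univ.erase z).erase j, l i ≤ ((n : ℝ) - 2) * l o := by
    calc ∑ i ∈ (univ.erase z).erase j, l i ≤ ((univ.erase z).erase j).card • l o :=
          Finset.sum_le_card_nsmul _ _ _
            (fun i hi => hle_o i (Finset.mem_of_mem_erase hi))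
      _ = ((n : ℝ) - 2) * l o := by rw [hcard2, nsmul_eq_mul, hcast2]
  have hjle : l j ≤ l o := hle_o j hjmem
  have hn2 : (2 : ℝ) ≤ (n : ℝ) := by exact_mod_cast hn
  rw [abs_le]
  constructor
  · nlinarith
  · nlinarith
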